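/- Nonsingularity of the transition matrix between Euler systems (combinatorial form of the first assertion of Corollary 5): let G be a simple graph on a finite vertex set V and v₁, …, v_k a finite sequence of vertices. Define G₀ = G and G_i = (G_{i-1})^{v_i} for 1 ≤ i ≤ k; let φ̄ be the constant transition function with value φ, and define s₀ = φ̄, s_i = (s_{i-1})^{G_{i-1}, v_i} for 1 ≤ i ≤ k. Then the matrix M(G_k, s_k) is invertible over GF(2). -/

import Mathlib

open scoped Classical

/-- The three transitions at a vertex, labeled relative to an Euler system. -/
inductive Transition : Type
  | phi | chi | psi
  deriving DecidableEq

variable {V : Type*} [Fintype V] [DecidableEq V]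

/-- Simple local complement `G^v`: toggle adjacency between distinct neighbors of `v`. -/
def localComp (G : SimpleGraph V) (v : V) : SimpleGraph V where
  Adj u w := u ≠ w ∧ Xor' (G.Adj u w) (G.Adj v u ∧ G.Adj v w)
  symm := ⟨by
    rintro u w ⟨hne, hx⟩
    refine ⟨hne.symm, ?_⟩
    rw [G.adj_comm w u, and_comm]
    exact hx⟩
  loopless := ⟨by rintro u ⟨hne, _⟩; exact hne rfl⟩

/-- Modified interlacement matrix `M(G, t)` over GF(2). -/
noncomputable def Mmat (G : SimpleGraph V) (t : V → Transition) : Matrix V V (ZMod 2) :=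
  Matrix.of fun w u =>
    if w = u then (if t u = Transition.chi then 0 else 1)
    else if t u = Transition.phi then 0
    else if G.Adj w u then 1 else 0

/-- Updated transition function `t^{G,v}`. -/
noncomputable def updT (G : SimpleGraph V) (v : V) (t : V → Transition) : V → Transition :=
  fun u =>
    if u = v then
      match t u with
      | Transition.phi => Transition.psi
      | Transition.psi => Transition.phi
      | Transition.chi => Transition.chi
    else if G.Adj v u then
      match t u with
      | Transition.chi => Transition.psi
      | Transition.psi => Transition.chi
      | Transition.phi => Transition.phi
    else t u

/-- Modified local complement of a matrix, taken with respect to `G` at `v`: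
add row `v` to the row of every neighbor of `v` in `G`. -/
noncomputable def modLC (G : SimpleGraph V) (v : V) (M : Matrix V V (ZMod 2)) :
    Matrix V V (ZMod 2) :=
  Matrix.of fun w u => if G.Adj v w then M w u + M v u else M w u

/-- One κ-step at `v` applied to a graph together with a transition function:
`(G, s) ↦ (G^v, s^{G,v})`. -/
noncomputable def stepGT (v : V) (p : SimpleGraph V × (V → Transition)) :
    SimpleGraph V × (V → Transition) :=
  (localComp p.1 v, updT p.1 v p.2)

/-! A κ-step `(G, t) ↦ (G^v, t^{G,v})` changes `M(G, t)` by the row operation `modLC G v`, which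
adds row `v` to the row of every neighbour of `v`. Over GF(2) this is left multiplication by an
involution, so invertibility propagates along the sequence from `M(G, φ̄) = 1`. -/

section Update

omit [Fintype V]

variable (G : SimpleGraph V) (v : V) (t : V → Transition) {u w : V}

omit [DecidableEq V] in
theorem localComp_adj_of_not_adj (hw : ¬G.Adj v w) :
    (localComp G v).Adj w u ↔ G.Adj w u := by
  show w ≠ u ∧ Xor (G.Adj w u) (G.Adj v w ∧ G.Adj v u) ↔ _
  simp only [hw, false_and, Xor, not_false_eq_true, and_true, or_false]
  exact ⟨And.right, fun h => ⟨G.ne_of_adj h, h⟩⟩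

omit [DecidableEq V] in
theorem localComp_adj_of_adj (hw : G.Adj v w) (hwu : w ≠ u) :
    (localComp G v).Adj w u ↔ Xor (G.Adj w u) (G.Adj v u) := by
  show w ≠ u ∧ Xor (G.Adj w u) (G.Adj v w ∧ G.Adj v u) ↔ _
  simp only [hw, hwu, true_and, ne_eq, not_false_eq_true]

theorem updT_eq_phi_iff_of_ne (hu : u ≠ v) : updT G v t u = .phi ↔ t u = .phi := by
  simp only [updT, hu, if_false]; split_ifs <;> cases t u <;> simp

theorem updT_self_eq_phi_iff : updT G v t v = .phi ↔ t v = .psi := by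
  unfold updT; cases t v <;> simp

theorem updT_eq_chi_iff_of_not_adj (hu : ¬G.Adj v u) : updT G v t u = .chi ↔ t u = .chi := by
  unfold updT; split_ifs <;> cases t u <;> simp

theorem updT_eq_chi_iff_of_adj (hu : G.Adj v u) : updT G v t u = .chi ↔ t u = .psi := by
  unfold updT; rw [if_neg (G.ne_of_adj hu).symm, if_pos hu]; cases t u <;> simp

theorem Mmat_apply_self : Mmat G t u u = if t u = .chi then 0 else 1 := by
  simp [Mmat]

theorem Mmat_apply_of_ne (h : w ≠ u) :
    Mmat G t w u = if t u = .phi then 0 else if G.Adj w u then 1 else 0 := by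
  simp [Mmat, h]

theorem Mmat_localComp_updT_apply_of_not_adj (hw : ¬G.Adj v w) :
    Mmat (localComp G v) (updT G v t) w u = Mmat G t w u := by
  by_cases hwu : w = u
  · subst hwu
    simp only [Mmat_apply_self, updT_eq_chi_iff_of_not_adj G v t hw]
  rw [Mmat_apply_of_ne _ _ hwu, Mmat_apply_of_ne _ _ hwu, localComp_adj_of_not_adj G v hw]
  by_cases huv : u = v
  · subst huv
    simp [G.adj_comm, hw]
  · simp only [updT_eq_phi_iff_of_ne G v t huv]

theorem Mmat_localComp_updT_apply_of_adj (hw : G.Adj v w) :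
    Mmat (localComp G v) (updT G v t) w u = Mmat G t w u + Mmat G t v u := by
  by_cases hwu : w = u
  · subst hwu
    rw [Mmat_apply_self, Mmat_apply_self, Mmat_apply_of_ne _ _ (G.ne_of_adj hw), if_pos hw]
    simp only [updT_eq_chi_iff_of_adj G v t hw]
    cases t w <;> decide
  by_cases huv : u = v
  · subst huv
    simp only [Mmat_apply_of_ne _ _ hwu, Mmat_apply_self, updT_self_eq_phi_iff,
      localComp_adj_of_adj G u hw hwu, G.adj_comm w u, hw, G.loopless.irrefl u]
    cases t u <;> decide
  simp only [Mmat_apply_of_ne _ _ hwu, Mmat_apply_of_ne _ _ (Ne.symm huv),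
    updT_eq_phi_iff_of_ne G v t huv, localComp_adj_of_adj G v hw hwu]
  by_cases hwu' : G.Adj w u <;> by_cases hvu : G.Adj v u <;> cases t u <;>
    simp [Xor, hwu', hvu] <;> decide

theorem Mmat_localComp_updT :
    Mmat (localComp G v) (updT G v t) = modLC G v (Mmat G t) := by
  ext w u
  by_cases hw : G.Adj v w
  · simp only [modLC, Matrix.of_apply, if_pos hw, Mmat_localComp_updT_apply_of_adj G v t hw]
  · simp only [modLC, Matrix.of_apply, if_neg hw, Mmat_localComp_updT_apply_of_not_adj G v t hw]

theorem Mmat_const_phi : Mmat G (fun _ => .phi) = 1 := by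
  ext w u
  by_cases h : w = u <;> simp [Mmat, Matrix.one_apply, h]

end Update

section RowOperation

variable (G : SimpleGraph V) (v : V)

theorem modLC_eq_mul (M : Matrix V V (ZMod 2)) : modLC G v M = modLC G v 1 * M := by
  ext w u
  by_cases hw : G.Adj v w <;>
    simp [modLC, hw, Matrix.mul_apply, add_mul, Finset.sum_add_distrib, Matrix.one_apply]

-- Row `v` is never modified (`v` is not its own neighbour), so adding it twice cancels.
omit [Fintype V] [DecidableEq V] in
theorem modLC_modLC (M : Matrix V V (ZMod 2)) : modLC G v (modLC G v M) = M := by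
  ext w u
  by_cases hw : G.Adj v w <;> simp [modLC, hw, add_assoc, CharTwo.add_self_eq_zero]

theorem isUnit_modLC {M : Matrix V V (ZMod 2)} (hM : IsUnit M) : IsUnit (modLC G v M) := by
  have h : modLC G v 1 * modLC G v 1 = 1 := by rw [← modLC_eq_mul, modLC_modLC]
  rw [modLC_eq_mul]
  exact (IsUnit.of_mul_eq_one _ h).mul hM

end RowOperation

theorem isUnit_Mmat_foldl_stepGT (vs : List V) (p : SimpleGraph V × (V → Transition))
    (hp : IsUnit (Mmat p.1 p.2)) :
    IsUnit (Mmat (vs.foldl (fun q v => stepGT v q) p).1 (vs.foldl (fun q v => stepGT v q) p).2) := by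
  induction vs generalizing p with
  | nil => exact hp
  | cons v vs ih =>
    apply ih
    show IsUnit (Mmat (localComp p.1 v) (updT p.1 v p.2))
    rw [Mmat_localComp_updT]
    exact isUnit_modLC _ _ hp

/-- first assertion of Corollary 5: with `G₀ = G`, `s₀ = φ̄` (the constant
`φ` transition), `G_i = G_{i-1}^{v_i}` and `s_i = s_{i-1}^{G_{i-1},v_i}`, the matrix
`M(G_k, s_k)` is invertible over GF(2). -/
theorem Mmat_transition_isUnit (G : SimpleGraph V) (vs : List V) :
    let p := vs.foldl (fun q v => stepGT v q) (G, fun _ => Transition.phi)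
    IsUnit (Mmat p.1 p.2) :=
  isUnit_Mmat_foldl_stepGT vs _ (by rw [Mmat_const_phi]; exact isUnit_one)
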